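/- The normalizer of the subgroup R_A × {0} in the group G = (SL(2,ℂ) × SL(2,ℂ)) ⋊ ℤ/2ℤ equals the subgroup S × {0} (i.e. N_G(R_A) = S, contained in G⁰; in particular no element with nontrivial ℤ/2ℤ-component normalizes R_A). -/

import Mathlib

open Matrix

abbrev SL2 := Matrix.SpecialLinearGroup (Fin 2) ℂ

/-- The diagonal matrix `diag(t, t⁻¹)` as an element of `SL(2,ℂ)`. -/
def dmat (t : ℂˣ) : SL2 :=
  ⟨!![(t : ℂ), 0; 0, ((t⁻¹ : ℂˣ) : ℂ)], by simp [Matrix.det_fin_two_of]⟩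

lemma dmat_one : dmat 1 = 1 := by
  apply Subtype.ext
  simp only [dmat, Matrix.SpecialLinearGroup.coe_one, Matrix.one_fin_two]
  norm_num

lemma dmat_mul (s t : ℂˣ) : dmat (s * t) = dmat s * dmat t := by
  apply Subtype.ext
  rw [Matrix.SpecialLinearGroup.coe_mul]
  simp only [dmat, Matrix.mul_fin_two]
  rw [mul_inv]
  push_cast
  norm_num

lemma dmat_inv (t : ℂˣ) : (dmat t)⁻¹ = dmat t⁻¹ := by
  apply Subtype.ext
  rw [Matrix.SpecialLinearGroup.coe_inv]
  simp only [dmat, Matrix.adjugate_fin_two_of]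
  norm_num

/-- The torus `R_A = {(diag(t,t⁻¹), diag(t³,t⁻³)) : t ∈ ℂˣ}`. -/
def RA : Subgroup (SL2 × SL2) where
  carrier := {p | ∃ t : ℂˣ, p = (dmat t, dmat (t ^ 3))}
  one_mem' := ⟨1, by rw [one_pow, dmat_one]; rfl⟩
  mul_mem' := by
    rintro a b ⟨s, rfl⟩ ⟨t, rfl⟩
    exact ⟨s * t, by rw [mul_pow, dmat_mul, dmat_mul]; rfl⟩
  inv_mem' := by
    rintro a ⟨t, rfl⟩
    exact ⟨t⁻¹, by rw [inv_pow, ← dmat_inv, ← dmat_inv]; rfl⟩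

/-- The subgroup `S` of `SL(2,ℂ) × SL(2,ℂ)` consisting of the pairs `(A,B)` with `A`
and `B` both diagonal or both antidiagonal. -/
def Ssub : Subgroup (SL2 × SL2) where
  carrier := {p |
    ((p.1 : Matrix (Fin 2) (Fin 2) ℂ) 0 1 = 0 ∧ (p.1 : Matrix (Fin 2) (Fin 2) ℂ) 1 0 = 0 ∧
     (p.2 : Matrix (Fin 2) (Fin 2) ℂ) 0 1 = 0 ∧ (p.2 : Matrix (Fin 2) (Fin 2) ℂ) 1 0 = 0) ∨
    ((p.1 : Matrix (Fin 2) (Fin 2) ℂ) 0 0 = 0 ∧ (p.1 : Matrix (Fin 2) (Fin 2) ℂ) 1 1 = 0 ∧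
     (p.2 : Matrix (Fin 2) (Fin 2) ℂ) 0 0 = 0 ∧ (p.2 : Matrix (Fin 2) (Fin 2) ℂ) 1 1 = 0)}
  one_mem' := by
    left
    simp [Matrix.SpecialLinearGroup.coe_one, Matrix.one_apply]
  mul_mem' := by
    intro a b ha hb
    rcases ha with ⟨h1, h2, h3, h4⟩ | ⟨h1, h2, h3, h4⟩ <;>
      rcases hb with ⟨g1, g2, g3, g4⟩ | ⟨g1, g2, g3, g4⟩
    · left
      refine ⟨?_, ?_, ?_, ?_⟩ <;>
        simp [Prod.fst_mul, Prod.snd_mul, Matrix.mul_apply, Fin.sum_univ_two,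
          h1, h2, h3, h4, g1, g2, g3, g4]
    · right
      refine ⟨?_, ?_, ?_, ?_⟩ <;>
        simp [Prod.fst_mul, Prod.snd_mul, Matrix.mul_apply, Fin.sum_univ_two,
          h1, h2, h3, h4, g1, g2, g3, g4]
    · right
      refine ⟨?_, ?_, ?_, ?_⟩ <;>
        simp [Prod.fst_mul, Prod.snd_mul, Matrix.mul_apply, Fin.sum_univ_two,
          h1, h2, h3, h4, g1, g2, g3, g4]
    · left
      refine ⟨?_, ?_, ?_, ?_⟩ <;>
        simp [Prod.fst_mul, Prod.snd_mul, Matrix.mul_apply, Fin.sum_univ_two,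
          h1, h2, h3, h4, g1, g2, g3, g4]
  inv_mem' := by
    intro a ha
    rcases ha with ⟨h1, h2, h3, h4⟩ | ⟨h1, h2, h3, h4⟩
    · left
      refine ⟨?_, ?_, ?_, ?_⟩ <;>
        simp [Prod.fst_inv, Prod.snd_inv, Matrix.SpecialLinearGroup.coe_inv,
          Matrix.adjugate_fin_two, h1, h2, h3, h4]
    · right
      refine ⟨?_, ?_, ?_, ?_⟩ <;>
        simp [Prod.fst_inv, Prod.snd_inv, Matrix.SpecialLinearGroup.coe_inv,
          Matrix.adjugate_fin_two, h1, h2, h3, h4]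

/-- The swap automorphism of `SL(2,ℂ) × SL(2,ℂ)`. -/
def swapAut : MulAut (SL2 × SL2) := (MulEquiv.prodComm : (SL2 × SL2) ≃* (SL2 × SL2))

lemma swapAut_apply (p : SL2 × SL2) : swapAut p = p.swap := rfl

lemma swapAut_sq : swapAut * swapAut = 1 := by
  apply MulEquiv.ext
  intro x
  rw [MulAut.mul_apply, swapAut_apply, swapAut_apply, Prod.swap_swap]
  rfl

/-- The homomorphism `ℤ/2ℤ →* MulAut N` determined by an automorphism of order
dividing 2, sending the nontrivial element to that automorphism. -/
def hom2 {N : Type*} [Group N] (σ : MulAut N) (h : σ * σ = 1) :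
    Multiplicative (ZMod 2) →* MulAut N where
  toFun e := σ ^ (Multiplicative.toAdd e).val
  map_one' := by simp
  map_mul' a b := by
    have h2 : σ ^ 2 = 1 := by rw [pow_two]; exact h
    show σ ^ (Multiplicative.toAdd (a * b)).val = _
    rw [toAdd_mul, ZMod.val_add, ← pow_eq_pow_mod _ h2, pow_add]

/-- The group `G = (SL(2,ℂ) × SL(2,ℂ)) ⋊ ℤ/2ℤ`, the nontrivial element of `ℤ/2ℤ`
acting by swapping the two factors. -/
abbrev Ggrp := (SL2 × SL2) ⋊[hom2 swapAut swapAut_sq] Multiplicative (ZMod 2)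

/-! A matrix conjugating `diag(t, t⁻¹)` to another diagonal matrix, with `t ≠ t⁻¹`, is
diagonal or antidiagonal. Conjugating `(diag(t, t⁻¹), diag(t³, t⁻³)) ∈ R_A` for a non-torsion
`t` therefore forces both components of a normalizing element to be diagonal or both
antidiagonal, since mixing the two would give `t³ = t⁻³`. An element with nontrivial
`ℤ/2ℤ`-component would instead conjugate `(diag(t³, t⁻³), diag(t, t⁻¹))` into `R_A`, which
forces `t^{±9} = t^{±1}`. -/

theorem Matrix.fin_two_diagonal_or_antidiagonal_of_mul_eq_mul {K : Type*} [CommRing K]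
    [NoZeroDivisors K] {A : Matrix (Fin 2) (Fin 2) K} (hA : A.det ≠ 0) {t u s r : K}
    (htu : t ≠ u) (h : A * !![t, 0; 0, u] = !![s, 0; 0, r] * A) :
    (s = t ∧ A 0 1 = 0 ∧ A 1 0 = 0) ∨ (s = u ∧ A 0 0 = 0 ∧ A 1 1 = 0) := by
  have e00 := congrFun (congrFun h 0) 0
  have e01 := congrFun (congrFun h 0) 1
  have e10 := congrFun (congrFun h 1) 0
  have e11 := congrFun (congrFun h 1) 1
  simp only [mul_apply, Fin.sum_univ_two, of_apply, cons_val', cons_val_zero, cons_val_one,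
    empty_val', cons_val_fin_one, mul_zero, zero_mul, add_zero, zero_add] at e00 e01 e10 e11
  rw [det_fin_two] at hA
  have hut : u - t ≠ 0 := sub_ne_zero.mpr htu.symm
  by_cases ha : A 0 0 = 0
  · have hb : A 0 1 ≠ 0 := fun hb => hA (by rw [ha, hb]; ring)
    have hc : A 1 0 ≠ 0 := fun hc => hA (by rw [ha, hc]; ring)
    have hs : s = u := mul_left_cancel₀ hb (by linear_combination -e01)
    have hr : r = t := mul_left_cancel₀ hc (by linear_combination -e10)
    have hd : A 1 1 * (u - t) = 0 := by linear_combination e11 + A 1 1 * hr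
    exact Or.inr ⟨hs, ha, (mul_eq_zero.mp hd).resolve_right hut⟩
  · have hs : s = t := mul_left_cancel₀ ha (by linear_combination -e00)
    have hb : A 0 1 = 0 := (mul_eq_zero.mp
      (by linear_combination e01 + A 0 1 * hs : A 0 1 * (u - t) = 0)).resolve_right hut
    have hd : A 1 1 ≠ 0 := fun hd => hA (by rw [hb, hd]; ring)
    have hr : r = u := mul_left_cancel₀ hd (by linear_combination -e11)
    have hc : A 1 0 * (u - t) = 0 := by linear_combination -e10 - A 1 0 * hr
    exact Or.inl ⟨hs, hb, (mul_eq_zero.mp hc).resolve_right hut⟩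

theorem ne_inv_of_not_isOfFinOrder {G : Type*} [Group G] {x : G} (hx : ¬IsOfFinOrder x) :
    x ≠ x⁻¹ := fun h =>
  hx (isOfFinOrder_iff_pow_eq_one.mpr ⟨2, two_pos, (sq x).trans (mul_eq_one_iff_eq_inv.mpr h)⟩)

theorem SemidirectProduct.mul_inl_mul_inv {N G : Type*} [Group N] [Group G]
    {φ : G →* MulAut N} (g : N ⋊[φ] G) (n : N) :
    g * inl n * g⁻¹ = inl (g.left * φ g.right n * g.left⁻¹) := by
  ext <;> simp

theorem hom2_ofAdd_one {N : Type*} [Group N] (σ : MulAut N) (h : σ * σ = 1) :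
    hom2 σ h (Multiplicative.ofAdd 1) = σ := by
  simp [hom2, ZMod.val_one]

theorem coe_dmat (t : ℂˣ) :
    (dmat t : Matrix (Fin 2) (Fin 2) ℂ) = !![(t : ℂ), 0; 0, (t : ℂ)⁻¹] := by
  simp [dmat, Units.val_inv_eq_inv_val]

theorem eq_and_diagonal_or_antidiagonal_of_conj_dmat {A : SL2} {t s : ℂˣ} (ht : t ≠ t⁻¹)
    (h : A * dmat t * A⁻¹ = dmat s) :
    (s = t ∧ A 0 1 = 0 ∧ A 1 0 = 0) ∨ (s = t⁻¹ ∧ A 0 0 = 0 ∧ A 1 1 = 0) := by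
  rw [mul_inv_eq_iff_eq_mul] at h
  have hm : (A : Matrix (Fin 2) (Fin 2) ℂ) * !![(t : ℂ), 0; 0, (t : ℂ)⁻¹] =
      !![(s : ℂ), 0; 0, (s : ℂ)⁻¹] * A := by
    simpa [coe_dmat] using congrArg Subtype.val h
  have ht' : (t : ℂ) ≠ (t : ℂ)⁻¹ := by
    rwa [← Units.val_inv_eq_inv_val, Ne, Units.val_inj]
  rcases fin_two_diagonal_or_antidiagonal_of_mul_eq_mul (by simp) ht' hm with
    ⟨hs, hb, hc⟩ | ⟨hs, ha, hd⟩
  · exact Or.inl ⟨Units.val_injective hs, hb, hc⟩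
  · exact Or.inr ⟨Units.val_injective (by simpa using hs), ha, hd⟩

theorem conj_dmat_of_diagonal {A : SL2} (hb : A 0 1 = 0) (hc : A 1 0 = 0) (t : ℂˣ) :
    A * dmat t * A⁻¹ = dmat t := by
  rw [mul_inv_eq_iff_eq_mul]
  ext i j
  fin_cases i <;> fin_cases j <;>
    simp [coe_dmat, mul_apply, Fin.sum_univ_two, hb, hc, mul_comm]

theorem conj_dmat_of_antidiagonal {A : SL2} (ha : A 0 0 = 0) (hd : A 1 1 = 0) (t : ℂˣ) :
    A * dmat t * A⁻¹ = dmat t⁻¹ := by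
  rw [mul_inv_eq_iff_eq_mul]
  ext i j
  fin_cases i <;> fin_cases j <;>
    simp [coe_dmat, mul_apply, Fin.sum_univ_two, ha, hd, mul_comm]

theorem conj_mem_RA_of_mem_Ssub {q n : SL2 × SL2} (hq : q ∈ Ssub) (hn : n ∈ RA) :
    q * n * q⁻¹ ∈ RA := by
  obtain ⟨t, rfl⟩ := hn
  rcases hq with ⟨hb₁, hc₁, hb₂, hc₂⟩ | ⟨ha₁, hd₁, ha₂, hd₂⟩
  · exact ⟨t, Prod.ext (conj_dmat_of_diagonal hb₁ hc₁ t) (conj_dmat_of_diagonal hb₂ hc₂ _)⟩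
  · refine ⟨t⁻¹, Prod.ext (conj_dmat_of_antidiagonal ha₁ hd₁ t) ?_⟩
    simpa [inv_pow] using conj_dmat_of_antidiagonal ha₂ hd₂ (t ^ 3)

theorem Ssub_le_normalizer_RA : Ssub ≤ Subgroup.normalizer (RA : Set (SL2 × SL2)) := by
  intro q hq n
  refine ⟨conj_mem_RA_of_mem_Ssub hq, fun h => ?_⟩
  simpa [mul_assoc] using conj_mem_RA_of_mem_Ssub (inv_mem hq) h

theorem mem_Ssub_of_conj_mem_RA {t : ℂˣ} (ht : ¬IsOfFinOrder t) {q : SL2 × SL2}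
    (h : q * (dmat t, dmat (t ^ 3)) * q⁻¹ ∈ RA) : q ∈ Ssub := by
  obtain ⟨s, hs⟩ := h
  obtain ⟨h₁, h₂⟩ := Prod.ext_iff.mp hs
  have ht₃ : t ^ 3 ≠ (t ^ 3)⁻¹ :=
    ne_inv_of_not_isOfFinOrder (mt (·.of_pow three_ne_zero) ht)
  rcases eq_and_diagonal_or_antidiagonal_of_conj_dmat (ne_inv_of_not_isOfFinOrder ht) h₁ with
    ⟨rfl, hb₁, hc₁⟩ | ⟨rfl, ha₁, hd₁⟩ <;>
  rcases eq_and_diagonal_or_antidiagonal_of_conj_dmat ht₃ h₂ with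
    ⟨hs₂, hb₂, hc₂⟩ | ⟨hs₂, ha₂, hd₂⟩
  · exact Or.inl ⟨hb₁, hc₁, hb₂, hc₂⟩
  · exact absurd hs₂ ht₃
  · exact absurd (hs₂.symm.trans (inv_pow t 3)) ht₃
  · exact Or.inr ⟨ha₁, hd₁, ha₂, hd₂⟩

theorem conj_swap_not_mem_RA {t : ℂˣ} (ht : ¬IsOfFinOrder t) (q : SL2 × SL2) :
    q * (dmat (t ^ 3), dmat t) * q⁻¹ ∉ RA := by
  rintro ⟨s, hs⟩
  obtain ⟨h₁, h₂⟩ := Prod.ext_iff.mp hs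
  have ht₃ : t ^ 3 ≠ (t ^ 3)⁻¹ :=
    ne_inv_of_not_isOfFinOrder (mt (·.of_pow three_ne_zero) ht)
  rcases eq_and_diagonal_or_antidiagonal_of_conj_dmat ht₃ h₁ with ⟨rfl, -⟩ | ⟨rfl, -⟩ <;>
  rcases eq_and_diagonal_or_antidiagonal_of_conj_dmat (ne_inv_of_not_isOfFinOrder ht) h₂ with
    ⟨h, -⟩ | ⟨h, -⟩ <;>
  · rw [← mul_inv_eq_one] at h
    group at h
    exact ht (isOfFinOrder_iff_zpow_eq_one.mpr ⟨_, by norm_num, h⟩)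

theorem conj_mem_RA_of_mem_normalizer {g : Ggrp}
    (hg : g ∈ Subgroup.normalizer
      ((RA.map (SemidirectProduct.inl : (SL2 × SL2) →* Ggrp)) : Set Ggrp))
    {n : SL2 × SL2} (hn : n ∈ RA) :
    g.left * (hom2 swapAut swapAut_sq g.right) n * g.left⁻¹ ∈ RA := by
  rw [← Subgroup.mem_map_iff_mem (f := (SemidirectProduct.inl : (SL2 × SL2) →* Ggrp))
      SemidirectProduct.inl_injective,
    ← SemidirectProduct.mul_inl_mul_inv]
  exact (hg _).mp (Subgroup.mem_map_of_mem _ hn)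

/-- **Proposition 4.6(iii).** The normalizer of `R_A × {0}` in
`G = (SL(2,ℂ) × SL(2,ℂ)) ⋊ ℤ/2ℤ` equals the subgroup `S × {0}`; in particular no
element with nontrivial `ℤ/2ℤ`-component normalizes `R_A`. -/
theorem normalizer_RA_eq_S :
    Subgroup.normalizer ((RA.map (SemidirectProduct.inl : (SL2 × SL2) →* Ggrp)) : Set Ggrp)
      = Ssub.map (SemidirectProduct.inl : (SL2 × SL2) →* Ggrp) := by
  refine le_antisymm (fun g hg => ?_)
    ((Subgroup.map_mono Ssub_le_normalizer_RA).trans (Subgroup.le_normalizer_map _))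
  set t : ℂˣ := Units.mk0 2 two_ne_zero
  have ht : ¬IsOfFinOrder t := fun h => by
    simpa [t] using ((Units.coeHom ℂ).isOfFinOrder h).norm_eq_one
  have hw := conj_mem_RA_of_mem_normalizer hg (n := (dmat t, dmat (t ^ 3))) ⟨t, rfl⟩
  have hZ2 : ∀ r : Multiplicative (ZMod 2), r = 1 ∨ r = Multiplicative.ofAdd 1 := by decide
  rcases hZ2 g.right with hr | hr
  · rw [hr, map_one, MulAut.one_apply] at hw
    exact ⟨g.left, mem_Ssub_of_conj_mem_RA ht hw, SemidirectProduct.ext rfl hr.symm⟩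
  · rw [hr, hom2_ofAdd_one, swapAut_apply] at hw
    exact absurd hw (conj_swap_not_mem_RA ht _)
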